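/- arXiv:1808.01499 — 2 statements merged into one kernel-verified Lean document; each statement's English description precedes it below -/
import Mathlib

section
/- Let $N \geq 2$, constants $c_1 > c_2 > 0$, $\rho$, $\mu_1 = r + \lambda_1 - g$, $\mu_N = r + \lambda_N - g$ with $\rho > \mu_1 \geq \mu_N$ and $\frac{c_1}{c_2} > \frac{\rho - \mu_N}{\rho - \mu_1}$. Let $v(\cdot, j) : \mathbb{R}_+ \to [c_2, c_1]$ for $j = 1, \dots, N$, and let $q_{1j} \geq 0$ ($j \neq 1$), $q_{11} = -\sum_{j\neq 1} q_{1j}$, $q_{Nj} \geq 0$ ($j \neq N$), $q_{NN} = -\sum_{j\neq N} q_{Nj}$. If for some $x > 0$ both inequalities hold: $-(\rho - \mu_1)c_1 + \sum_{j\neq 1} q_{1j} v(x,j) + q_{11} c_1 + h'(x) \geq 0$ and $-(\rho - \mu_N)c_2 + \sum_{j\neq N} q_{Nj} v(x,j) + q_{NN} c_2 + h'(x) \leq 0$, then a contradiction follows; i.e., no such $x$ exists. -/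
open Finset

section GeneratorRow

variable {ι R : Type*} [Fintype ι] [DecidableEq ι] [CommRing R] [LinearOrder R]
  [IsStrictOrderedRing R] {q f : ι → R} {i : ι} {a : R}

-- `q` is row `i` of a Markov generator (Q-matrix).
theorem sum_erase_mul_add_mul_le_zero (hq : ∀ j, j ≠ i → 0 ≤ q j)
    (hqi : q i = -∑ j ∈ univ.erase i, q j) (hf : ∀ j, j ≠ i → f j ≤ a) :
    ∑ j ∈ univ.erase i, q j * f j + q i * a ≤ 0 := by
  have hsum : ∑ j ∈ univ.erase i, q j * f j ≤ ∑ j ∈ univ.erase i, q j * a :=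
    sum_le_sum fun j hj => mul_le_mul_of_nonneg_left (hf j (ne_of_mem_erase hj))
      (hq j (ne_of_mem_erase hj))
  rw [← sum_mul] at hsum
  rw [hqi]
  linarith

theorem sum_erase_mul_add_mul_nonneg (hq : ∀ j, j ≠ i → 0 ≤ q j)
    (hqi : q i = -∑ j ∈ univ.erase i, q j) (hf : ∀ j, j ≠ i → a ≤ f j) :
    0 ≤ ∑ j ∈ univ.erase i, q j * f j + q i * a := by
  have := sum_erase_mul_add_mul_le_zero (f := -f) (a := -a) hq hqi
    fun j hj => neg_le_neg (hf j hj)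
  simp only [Pi.neg_apply, mul_neg, sum_neg_distrib] at this
  linarith

end GeneratorRow

theorem stmt10_general {ι : Type*} [Fintype ι] [DecidableEq ι] (i1 iN : ι)
    (c1 c2 ρ μ1 μN : ℝ) (h' : ℝ → ℝ)
    (hc2 : 0 < c2) (hρ : μ1 < ρ)
    (hratio : c1 / c2 > (ρ - μN) / (ρ - μ1))
    (v : ℝ → ι → ℝ) (hv : ∀ x j, c2 ≤ v x j ∧ v x j ≤ c1)
    (q1 qN : ι → ℝ)
    (hq1 : ∀ j, j ≠ i1 → 0 ≤ q1 j) (hqN : ∀ j, j ≠ iN → 0 ≤ qN j)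
    (hq11 : q1 i1 = -∑ j ∈ Finset.univ.erase i1, q1 j)
    (hqNN : qN iN = -∑ j ∈ Finset.univ.erase iN, qN j)
    (x : ℝ)
    (hG : 0 ≤ -(ρ - μ1) * c1 + (∑ j ∈ Finset.univ.erase i1, q1 j * v x j)
        + q1 i1 * c1 + h' x)
    (hF : -(ρ - μN) * c2 + (∑ j ∈ Finset.univ.erase iN, qN j * v x j)
        + qN iN * c2 + h' x ≤ 0) :
    False := by
  have hG_le := sum_erase_mul_add_mul_le_zero hq1 hq11 fun j _ => (hv x j).2
  have hF_ge := sum_erase_mul_add_mul_nonneg hqN hqNN fun j _ => (hv x j).1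
  have hcost : (ρ - μN) * c2 < c1 * (ρ - μ1) :=
    (div_lt_div_iff₀ (sub_pos.mpr hρ) hc2).mp hratio
  linarith

/-- Core estimate in the proof of `a(N) < b(1)`: the two variational inequalities
cannot hold simultaneously at any `x > 0`. -/
theorem stmt10 {ι : Type*} [Fintype ι] [DecidableEq ι] (i1 iN : ι) (hne : i1 ≠ iN)
    (c1 c2 ρ r g lam1 lamN μ1 μN : ℝ) (h' : ℝ → ℝ)
    (hμ1 : μ1 = r + lam1 - g) (hμN : μN = r + lamN - g)
    (hc2 : 0 < c2) (hc12 : c2 < c1) (hρ : μ1 < ρ) (hμ : μN ≤ μ1)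
    (hratio : c1 / c2 > (ρ - μN) / (ρ - μ1))
    (v : ℝ → ι → ℝ) (hv : ∀ x j, c2 ≤ v x j ∧ v x j ≤ c1)
    (q1 qN : ι → ℝ)
    (hq1 : ∀ j, j ≠ i1 → 0 ≤ q1 j) (hqN : ∀ j, j ≠ iN → 0 ≤ qN j)
    (hq11 : q1 i1 = -∑ j ∈ Finset.univ.erase i1, q1 j)
    (hqNN : qN iN = -∑ j ∈ Finset.univ.erase iN, qN j)
    (x : ℝ) (hx : 0 < x)
    (hG : 0 ≤ -(ρ - μ1) * c1 + (∑ j ∈ Finset.univ.erase i1, q1 j * v x j)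
        + q1 i1 * c1 + h' x)
    (hF : -(ρ - μN) * c2 + (∑ j ∈ Finset.univ.erase iN, qN j * v x j)
        + qN iN * c2 + h' x ≤ 0) :
    False :=
  stmt10_general i1 iN c1 c2 ρ μ1 μN h' hc2 hρ hratio v hv q1 qN hq1 hqN hq11 hqNN x hG hF
end

section
/- Let $\Phi_1(\beta) = \frac{1}{2}\sigma^2\beta^2 + (\mu_1 + \frac{1}{2}\sigma^2)\beta - (\rho + q_1 - \mu_1)$ and $\Phi_2(\beta) = \frac{1}{2}\sigma^2\beta^2 + (\mu_2 + \frac{1}{2}\sigma^2)\beta - (\rho + q_2 - \mu_2)$ with $\sigma, q_1, q_2 > 0$, $\mu_1, \mu_2 \in \mathbb{R}$, and $\rho + q_i - \mu_i > q_i > 0$ for $i = 1,2$ (i.e., $\rho > \mu_i$). Then the quartic equation $\Phi_1(\beta)\Phi_2(\beta) = q_1 q_2$ has at least two positive real roots and at least two negative real roots, in total four distinct real roots $\beta_4 < \beta_3 < 0 < \beta_2 < \beta_1$. -/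
/-!
`F = Φ₁Φ₂` is continuous, tends to `+∞` at both ends, and `F 0 = (ρ + q₁ - μ₁)(ρ + q₂ - μ₂) > q₁q₂`.
Since `Φ₁ 0 < 0`, `Φ₁` has a root `r > 0` and a root `r' < 0`, where `F` vanishes. The intermediate
value theorem on `(0, r)` and on `(r, ∞)` gives the two positive roots of `F = q₁q₂`, and the same
argument on `(r', 0)` and `(-∞, r')` (applied to `β ↦ F (-β)`) gives the two negative ones.
-/

open Filter Set

lemma tendsto_quadratic_atTop {a : ℝ} (b c : ℝ) (ha : 0 < a) :
    Tendsto (fun x : ℝ => a * x ^ 2 + b * x + c) atTop atTop := by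
  have hlin : Tendsto (fun x : ℝ => a * x + b) atTop atTop :=
    tendsto_atTop_add_const_right _ b (tendsto_id.const_mul_atTop ha)
  exact (tendsto_atTop_add_const_right _ c (tendsto_id.atTop_mul_atTop₀ hlin)).congr
    fun x => by simp only [id]; ring

lemma exists_two_eq_of_tendsto_atTop {f : ℝ → ℝ} (hf : Continuous f)
    (htop : Tendsto f atTop atTop) {x₀ r c : ℝ} (hx₀r : x₀ < r) (hx₀ : c < f x₀)
    (hr : f r < c) : ∃ x y, x₀ < x ∧ x < y ∧ f x = c ∧ f y = c := by
  obtain ⟨x, hx, hfx⟩ := intermediate_value_Ioo' hx₀r.le hf.continuousOn ⟨hr, hx₀⟩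
  obtain ⟨y, hy, hfy⟩ := intermediate_value_Ioi hf.continuousOn htop hr
  exact ⟨x, y, hx.1, hx.2.trans hy, hfx, hfy⟩

lemma exists_two_pos_eq_of_mul_quadratic {a k c₁ c₂ : ℝ} (b₁ b₂ : ℝ) (ha : 0 < a)
    (hc₁ : c₁ < 0) (hk : 0 < k) (hkc : k < c₁ * c₂) :
    ∃ x y, 0 < x ∧ x < y ∧
      (a * x ^ 2 + b₁ * x + c₁) * (a * x ^ 2 + b₂ * x + c₂) = k ∧
      (a * y ^ 2 + b₁ * y + c₁) * (a * y ^ 2 + b₂ * y + c₂) = k := by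
  have htop₁ := tendsto_quadratic_atTop b₁ c₁ ha
  have hcont₁ : Continuous fun x : ℝ => a * x ^ 2 + b₁ * x + c₁ := by fun_prop
  obtain ⟨r, hr, hroot⟩ : ∃ r, 0 < r ∧ a * r ^ 2 + b₁ * r + c₁ = 0 := by
    simpa using intermediate_value_Ioi hcont₁.continuousOn htop₁ (by simpa using hc₁)
  exact exists_two_eq_of_tendsto_atTop (by fun_prop)
    (htop₁.atTop_mul_atTop₀ (tendsto_quadratic_atTop b₂ c₂ ha)) hr (by simpa using hkc)
    (by simpa [hroot] using hk)

/-- The quartic characteristic equation `Φ₁(β)Φ₂(β) = q₁q₂` of the coupled two-regime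
ODE system has four distinct real roots `β₄ < β₃ < 0 < β₂ < β₁`. -/
theorem stmt17 (σ q1 q2 μ1 μ2 ρ : ℝ) (hσ : 0 < σ) (hq1 : 0 < q1) (hq2 : 0 < q2)
    (hρ1 : μ1 < ρ) (hρ2 : μ2 < ρ)
    (Φ1 Φ2 : ℝ → ℝ)
    (hΦ1 : ∀ β, Φ1 β = σ^2/2 * β^2 + (μ1 + σ^2/2) * β - (ρ + q1 - μ1))
    (hΦ2 : ∀ β, Φ2 β = σ^2/2 * β^2 + (μ2 + σ^2/2) * β - (ρ + q2 - μ2)) :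
    ∃ β1 β2 β3 β4 : ℝ, β4 < β3 ∧ β3 < 0 ∧ 0 < β2 ∧ β2 < β1 ∧
      Φ1 β1 * Φ2 β1 = q1 * q2 ∧ Φ1 β2 * Φ2 β2 = q1 * q2 ∧
      Φ1 β3 * Φ2 β3 = q1 * q2 ∧ Φ1 β4 * Φ2 β4 = q1 * q2 := by
  have ha : 0 < σ ^ 2 / 2 := by positivity
  have hc₁ : -(ρ + q1 - μ1) < 0 := by linarith
  have hk : 0 < q1 * q2 := by positivity
  have hkc : q1 * q2 < -(ρ + q1 - μ1) * -(ρ + q2 - μ2) := by nlinarith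
  obtain ⟨β2, β1, hβ2, hβ21, hF2, hF1⟩ :=
    exists_two_pos_eq_of_mul_quadratic (μ1 + σ ^ 2 / 2) (μ2 + σ ^ 2 / 2) ha hc₁ hk hkc
  obtain ⟨x, y, hx, hxy, hFx, hFy⟩ :=
    exists_two_pos_eq_of_mul_quadratic (-(μ1 + σ ^ 2 / 2)) (-(μ2 + σ ^ 2 / 2)) ha hc₁ hk hkc
  refine ⟨β1, β2, -x, -y, by linarith, by linarith, hβ2, hβ21, ?_, ?_, ?_, ?_⟩ <;>
    simp only [hΦ1, hΦ2]
  exacts [by linear_combination hF1, by linear_combination hF2, by linear_combination hFx,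
    by linear_combination hFy]
end
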